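/- Let a, â be two square-summable families indexed by odd n,m ≥ 1, both satisfying the quadratic identity Σ β_{n,m}(λ+μ+ν β_{n,m})(β_{n,m}−2)|c_{n,m}|² = 0 (with c = a and c = â respectively, and also for any linear combination c = a − t·â), where ν>0, μ≥0, λ+μ+ν/2>0 and β_{n,m}=(n²+m²)/4. If â_{1,1} ≠ 0, then setting t = a_{1,1}/â_{1,1}, the identity applied to a − t·â forces a_{n,m} = t·â_{n,m} for all odd n,m ≥ 1; i.e., a and â are linearly dependent. -/

import Mathlib

/-- β_{n,m} = (n²+m²)/4. -/
noncomputable def beta (n m : ℕ) : ℝ := ((n : ℝ)^2 + (m : ℝ)^2) / 4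

/-- The weight β_{n,m}(λ+μ+ν β_{n,m})(β_{n,m}−2). -/
noncomputable def wgt (lam mu nu : ℝ) (n m : ℕ) : ℝ :=
  beta n m * (lam + mu + nu * beta n m) * (beta n m - 2)

/-! The only odd pair with `β_{n,m} ≤ 2` is `(1,1)`, so for `c = a - t â` with `t` chosen to kill
`c_{1,1}` every term of the quadratic identity is nonnegative; a nonnegative series with sum zero
vanishes termwise, and the remaining weights are positive. -/

lemma five_halves_le_beta {n m : ℕ} (hn : Odd n) (hm : Odd m) (h : ¬(n = 1 ∧ m = 1)) :
    5 / 2 ≤ beta n m := by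
  obtain ⟨i, rfl⟩ := hn
  obtain ⟨j, rfl⟩ := hm
  have h10 : 10 ≤ (2 * i + 1) ^ 2 + (2 * j + 1) ^ 2 := by
    rcases Nat.eq_zero_or_pos i with rfl | hi <;> rcases Nat.eq_zero_or_pos j with rfl | hj
    · simp at h
    all_goals nlinarith
  have : (10 : ℝ) ≤ ((2 * i + 1 : ℕ) : ℝ) ^ 2 + ((2 * j + 1 : ℕ) : ℝ) ^ 2 := by
    exact_mod_cast h10
  unfold beta
  linarith

lemma wgt_pos {lam mu nu : ℝ} (hnu : 0 < nu) (hpos : 0 < lam + mu + nu / 2)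
    {n m : ℕ} (hn : Odd n) (hm : Odd m) (h : ¬(n = 1 ∧ m = 1)) :
    0 < wgt lam mu nu n m := by
  have hb := five_halves_le_beta hn hm h
  have hA : 0 < lam + mu + nu * beta n m := by nlinarith
  unfold wgt
  exact mul_pos (mul_pos (by linarith) hA) (by linarith)

lemma eq_zero_of_tsum_wgt_mul_sq_eq_zero {lam mu nu : ℝ} (hnu : 0 < nu)
    (hpos : 0 < lam + mu + nu / 2) {c : ℕ → ℕ → ℝ}
    (hsupp : ∀ n m : ℕ, ¬(1 ≤ n ∧ 1 ≤ m ∧ Odd n ∧ Odd m) → c n m = 0) (hc11 : c 1 1 = 0)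
    (hsumm : Summable fun p : ℕ × ℕ => wgt lam mu nu p.1 p.2 * c p.1 p.2 ^ 2)
    (hquad : ∑' p : ℕ × ℕ, wgt lam mu nu p.1 p.2 * c p.1 p.2 ^ 2 = 0)
    {n m : ℕ} (hn : Odd n) (hm : Odd m) :
    c n m = 0 := by
  by_cases h11 : n = 1 ∧ m = 1
  · rwa [h11.1, h11.2]
  have hnonneg : ∀ p : ℕ × ℕ, 0 ≤ wgt lam mu nu p.1 p.2 * c p.1 p.2 ^ 2 := by
    rintro ⟨x, y⟩
    by_cases hxy : 1 ≤ x ∧ 1 ≤ y ∧ Odd x ∧ Odd y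
    · by_cases hxy11 : x = 1 ∧ y = 1
      · simp [hxy11.1, hxy11.2, hc11]
      · have := wgt_pos hnu hpos hxy.2.2.1 hxy.2.2.2 hxy11
        positivity
    · simp [hsupp x y hxy]
  have hterm := congr_fun ((hasSum_zero_iff_of_nonneg hnonneg).mp (hquad ▸ hsumm.hasSum)) (n, m)
  simpa [(wgt_pos hnu hpos hn hm h11).ne'] using hterm

theorem stmt_4_general (lam mu nu : ℝ) (hnu : nu > 0)
    (hpos : lam + mu + nu / 2 > 0)
    (a ahat : ℕ → ℕ → ℝ)
    (hasupp : ∀ n m : ℕ, ¬(1 ≤ n ∧ 1 ≤ m ∧ Odd n ∧ Odd m) → a n m = 0)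
    (hahatsupp : ∀ n m : ℕ, ¬(1 ≤ n ∧ 1 ≤ m ∧ Odd n ∧ Odd m) → ahat n m = 0)
    (hsumm : ∀ t : ℝ, Summable fun p : ℕ × ℕ =>
      wgt lam mu nu p.1 p.2 * (a p.1 p.2 - t * ahat p.1 p.2) ^ 2)
    (hquad : ∀ t : ℝ,
      ∑' p : ℕ × ℕ, wgt lam mu nu p.1 p.2 * (a p.1 p.2 - t * ahat p.1 p.2) ^ 2 = 0)
    (hne : ahat 1 1 ≠ 0) :
    ∀ n m : ℕ, Odd n → Odd m → a n m = (a 1 1 / ahat 1 1) * ahat n m := by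
  intro n m hn hm
  set t := a 1 1 / ahat 1 1
  have hc11 : a 1 1 - t * ahat 1 1 = 0 := by
    rw [div_mul_cancel₀ _ hne, sub_self]
  have hcsupp : ∀ n m : ℕ, ¬(1 ≤ n ∧ 1 ≤ m ∧ Odd n ∧ Odd m) → a n m - t * ahat n m = 0 :=
    fun n m h => by rw [hasupp n m h, hahatsupp n m h, mul_zero, sub_zero]
  exact sub_eq_zero.mp
    (eq_zero_of_tsum_wgt_mul_sq_eq_zero hnu hpos hcsupp hc11 (hsumm t) (hquad t) hn hm)

theorem stmt_4 (lam mu nu : ℝ) (hnu : nu > 0) (hmu : mu ≥ 0)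
    (hpos : lam + mu + nu / 2 > 0)
    (a ahat : ℕ → ℕ → ℝ)
    (hasupp : ∀ n m : ℕ, ¬(1 ≤ n ∧ 1 ≤ m ∧ Odd n ∧ Odd m) → a n m = 0)
    (hahatsupp : ∀ n m : ℕ, ¬(1 ≤ n ∧ 1 ≤ m ∧ Odd n ∧ Odd m) → ahat n m = 0)
    (hsumm : ∀ t : ℝ, Summable fun p : ℕ × ℕ =>
      wgt lam mu nu p.1 p.2 * (a p.1 p.2 - t * ahat p.1 p.2) ^ 2)
    (hquad : ∀ t : ℝ,
      ∑' p : ℕ × ℕ, wgt lam mu nu p.1 p.2 * (a p.1 p.2 - t * ahat p.1 p.2) ^ 2 = 0)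
    (hne : ahat 1 1 ≠ 0) :
    ∀ n m : ℕ, Odd n → Odd m → a n m = (a 1 1 / ahat 1 1) * ahat n m :=
  stmt_4_general lam mu nu hnu hpos a ahat hasupp hahatsupp hsumm hquad hne
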